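/- arXiv:2209.15513 — 3 statements merged into one kernel-verified Lean document; each statement's English description precedes it below -/
import Mathlib

section
/- For every h ∈ {1,…,n} and every a ∈ ℤ, the set T(h,a) is a triangulation of P_{n,∞}: its elements are pairwise non-crossing, and every tagged edge not belonging to T(h,a) crosses some element of T(h,a). -/
/-!
STATEMENT 3: For every line `h` and every `a ∈ ℤ`, the set `T(h,a)` of all tagged
edges with first endpoint `(h,a)` is a triangulation of `P_{n,∞}`: its elements are
pairwise non-crossing, and every tagged edge not in `T(h,a)` crosses some element of
`T(h,a)`.  Lines are indexed by `Fin (n+1)`, covering all `n ≥ 1`.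
-/

namespace PuncturedGon

/-- An (unconstrained) edge datum of the punctured `(n+1,∞)`-gon. -/
structure Edge (n : ℕ) where
  p : Fin (n + 1) × ℤ
  q : Fin (n + 1) × ℤ
  sgn : ℤ

/-- `E` is a tagged edge: `q ≠ (p₁, p₂ + 1)`, the sign is `±1`, and the sign is `+1`
whenever the two endpoints are distinct. -/
def IsTagged {n : ℕ} (E : Edge n) : Prop :=
  E.q ≠ (E.p.1, E.p.2 + 1) ∧ (E.sgn = 1 ∨ E.sgn = -1) ∧ (E.p ≠ E.q → E.sgn = 1)

/-- `σ(a) = 1/2 + a/(2(1+|a|)) ∈ (0,1)`. -/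
noncomputable def sig (a : ℤ) : ℝ := 1 / 2 + (a : ℝ) / (2 * (1 + |(a : ℝ)|))

/-- The embedding of the marked points into the circle `ℝ/ℤ`
(the `h`-th line, `h : Fin (n+1)`, occupies the arc `[h/(n+1), (h+1)/(n+1)]`). -/
noncomputable def theta (n : ℕ) (p : Fin (n + 1) × ℤ) : ℝ :=
  ((p.1.val : ℝ) + sig p.2) / (n + 1)

/-- `(x, y)` is a lift of the edge `E` (with distinct endpoints): `x ≡ θ(E.p)` and
`y ≡ θ(E.q)` modulo `1`, with `y ∈ (x, x + 1)`. -/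
def IsLift {n : ℕ} (E : Edge n) (x y : ℝ) : Prop :=
  (∃ k : ℤ, x = theta n E.p + k) ∧ (∃ k : ℤ, y = theta n E.q + k) ∧ x < y ∧ y < x + 1

/-- `E` crosses `F`. -/
def Crosses {n : ℕ} (E F : Edge n) : Prop :=
  (E.p ≠ E.q ∧ F.p ≠ F.q ∧ ∃ x₁ y₁ x₂ y₂ : ℝ,
    IsLift E x₁ y₁ ∧ IsLift F x₂ y₂ ∧
    ((x₁ < x₂ ∧ x₂ < y₁ ∧ y₁ < y₂) ∨ (x₂ < x₁ ∧ x₁ < y₂ ∧ y₂ < y₁))) ∨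
  (E.p ≠ E.q ∧ F.p = F.q ∧ ∃ x y t : ℝ,
    IsLift E x y ∧ (∃ k : ℤ, t = theta n F.p + k) ∧ x < t ∧ t < y) ∨
  (E.p = E.q ∧ F.p ≠ F.q ∧ ∃ x y t : ℝ,
    IsLift F x y ∧ (∃ k : ℤ, t = theta n E.p + k) ∧ x < t ∧ t < y) ∨
  (E.p = E.q ∧ F.p = F.q ∧ E.p ≠ F.p ∧ E.sgn ≠ F.sgn)

/-- A set of edges is pairwise non-crossing. -/
def PairwiseNoncrossing {n : ℕ} (T : Set (Edge n)) : Prop :=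
  ∀ E ∈ T, ∀ F ∈ T, ¬ Crosses E F

/-- A triangulation of `P_{n+1,∞}`: a maximal set of pairwise non-crossing tagged
edges. -/
def IsTriangulation {n : ℕ} (T : Set (Edge n)) : Prop :=
  (∀ E ∈ T, IsTagged E) ∧ PairwiseNoncrossing T ∧
    ∀ E : Edge n, IsTagged E → E ∉ T → ∃ F ∈ T, Crosses E F

end PuncturedGon

namespace PuncturedGon

/-- `T(h,a)`: the set of all tagged edges whose first endpoint is `(h,a)`. -/
def Tset (n : ℕ) (h : Fin (n + 1)) (a : ℤ) : Set (Edge n) :=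
  {E : Edge n | IsTagged E ∧ E.p = (h, a)}


section Helpers

lemma sig_pos (a : ℤ) : 0 < sig a := by
  unfold sig
  have hd : (0:ℝ) < 2 * (1 + |(a:ℝ)|) := by positivity
  have h1 : -(1 + |(a:ℝ)|) < (a:ℝ) := by
    have := neg_abs_le (a:ℝ); linarith
  have h2 : -(1/2 : ℝ) < (a:ℝ) / (2 * (1 + |(a:ℝ)|)) := by
    rw [lt_div_iff₀ hd]; linarith
  linarith

lemma sig_lt_one (a : ℤ) : sig a < 1 := by
  unfold sig
  have hd : (0:ℝ) < 2 * (1 + |(a:ℝ)|) := by positivity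
  have h1 : (a:ℝ) < 1 + |(a:ℝ)| := by
    have := le_abs_self (a:ℝ); linarith
  have h2 : (a:ℝ) / (2 * (1 + |(a:ℝ)|)) < 1/2 := by
    rw [div_lt_iff₀ hd]; linarith
  linarith

lemma sig_lt_sig {a b : ℤ} (hab : a < b) : sig a < sig b := by
  unfold sig
  have hab' : (a:ℝ) < b := by exact_mod_cast hab
  have hda : (0:ℝ) < 2 * (1 + |(a:ℝ)|) := by positivity
  have hdb : (0:ℝ) < 2 * (1 + |(b:ℝ)|) := by positivity
  have key : (a:ℝ) / (2 * (1 + |(a:ℝ)|)) < (b:ℝ) / (2 * (1 + |(b:ℝ)|)) := by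
    rw [div_lt_div_iff₀ hda hdb]
    rcases le_or_gt 0 (a:ℝ) with ha | ha
    · have hb : (0:ℝ) ≤ b := by linarith
      rw [abs_of_nonneg ha, abs_of_nonneg hb]; nlinarith
    · rcases le_or_gt (b:ℝ) 0 with hb | hb
      · rw [abs_of_neg ha, abs_of_nonpos hb]; nlinarith
      · rw [abs_of_neg ha, abs_of_pos hb]; nlinarith
  linarith

lemma sig_lt_iff {a b : ℤ} : sig a < sig b ↔ a < b := by
  constructor
  · intro hs
    by_contra hc
    push_neg at hc
    rcases eq_or_lt_of_le hc with h | h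
    · rw [h] at hs; exact lt_irrefl _ hs
    · exact absurd hs (not_lt.2 (le_of_lt (sig_lt_sig h)))
  · exact sig_lt_sig

lemma theta_pos (n : ℕ) (p : Fin (n + 1) × ℤ) : 0 < theta n p := by
  unfold theta
  have h1 : (0:ℝ) ≤ p.1.val := by positivity
  have h2 := sig_pos p.2
  have hn : (0:ℝ) < (n:ℝ) + 1 := by positivity
  exact div_pos (by linarith) hn

lemma theta_lt_one (n : ℕ) (p : Fin (n + 1) × ℤ) : theta n p < 1 := by
  unfold theta
  have h1 : (p.1.val : ℝ) ≤ n := by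
    have := p.1.isLt
    exact_mod_cast Nat.le_of_lt_succ this
  have h2 := sig_lt_one p.2
  have hn : (0:ℝ) < (n:ℝ) + 1 := by positivity
  rw [div_lt_one hn]; linarith

lemma theta_inj {n : ℕ} {p q : Fin (n + 1) × ℤ} (h : theta n p = theta n q) : p = q := by
  unfold theta at h
  have hn : (0:ℝ) < (n:ℝ) + 1 := by positivity
  have h' : (p.1.val : ℝ) + sig p.2 = (q.1.val : ℝ) + sig q.2 := by
    field_simp at h; exact h
  have hs1 := sig_pos p.2
  have hs2 := sig_lt_one p.2
  have hs3 := sig_pos q.2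
  have hs4 := sig_lt_one q.2
  have h1 : p.1.val = q.1.val := by
    have e1 : (p.1.val : ℝ) < (q.1.val : ℝ) + 1 := by linarith
    have e2 : (q.1.val : ℝ) < (p.1.val : ℝ) + 1 := by linarith
    have e1' : p.1.val < q.1.val + 1 := by exact_mod_cast e1
    have e2' : q.1.val < p.1.val + 1 := by exact_mod_cast e2
    omega
  have h2 : sig p.2 = sig q.2 := by
    rw [show ((p.1.val : ℝ)) = ((q.1.val : ℝ)) by exact_mod_cast h1] at h'
    linarith
  have h3 : p.2 = q.2 := by
    by_contra hc
    rcases lt_or_gt_of_ne hc with hlt | hlt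
    · exact absurd h2 (ne_of_lt (sig_lt_sig hlt))
    · exact absurd h2.symm (ne_of_lt (sig_lt_sig hlt))
  exact Prod.ext (Fin.ext h1) h3

lemma theta_succ' (n : ℕ) (k : Fin (n+1)) (b : ℤ) :
    theta n (k, b) < theta n (k, b + 1) := by
  unfold theta
  have hn : (0:ℝ) < (n:ℝ) + 1 := by positivity
  have := sig_lt_sig (lt_add_one b)
  exact div_lt_div_of_pos_right (by simpa using by linarith) hn

lemma no_between {n : ℕ} (p r : Fin (n + 1) × ℤ)
    (h1 : theta n p < theta n r) (h2 : theta n r < theta n (p.1, p.2 + 1)) : False := by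
  unfold theta at h1 h2
  have hn : (0:ℝ) < (n:ℝ) + 1 := by positivity
  rw [div_lt_div_iff_of_pos_right hn] at h1 h2
  simp only at h1 h2
  have hs1 := sig_pos p.2
  have hs2 := sig_lt_one p.2
  have hs3 := sig_pos r.2
  have hs4 := sig_lt_one r.2
  have hs5 := sig_pos (p.2 + 1)
  have hs6 := sig_lt_one (p.2 + 1)
  have e1 : (p.1.val : ℝ) < (r.1.val : ℝ) + 1 := by linarith
  have e2 : (r.1.val : ℝ) < (p.1.val : ℝ) + 1 := by linarith
  have e1' : p.1.val < r.1.val + 1 := by exact_mod_cast e1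
  have e2' : r.1.val < p.1.val + 1 := by exact_mod_cast e2
  have hval : p.1.val = r.1.val := by omega
  rw [show ((p.1.val : ℝ)) = ((r.1.val : ℝ)) from by exact_mod_cast hval] at h1 h2
  have g1 : sig p.2 < sig r.2 := by linarith
  have g2 : sig r.2 < sig (p.2 + 1) := by linarith
  have := sig_lt_iff.1 g1
  have := sig_lt_iff.1 g2
  omega

lemma int_gap {c x t : ℝ} (k1 k2 : ℤ) (hx : x = c + k1) (ht : t = c + k2)
    (h1 : x < t) (h2 : t < x + 1) : False := by
  have e1 : (k1:ℝ) < k2 := by linarith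
  have e2 : (k2:ℝ) < (k1:ℝ) + 1 := by linarith
  have e1' : k1 < k2 := by exact_mod_cast e1
  have e2' : (k2:ℝ) < ((k1 + 1 : ℤ) : ℝ) := by push_cast; linarith
  have e2'' : k2 < k1 + 1 := by exact_mod_cast e2'
  omega

end Helpers

/-- each `T(h,a)` is a triangulation of `P_{n+1,∞}`: its elements are
pairwise non-crossing tagged edges, and every tagged edge not belonging to `T(h,a)`
crosses some element of `T(h,a)`. -/
theorem Tset_isTriangulation (n : ℕ) (h : Fin (n + 1)) (a : ℤ) :
    (∀ E ∈ Tset n h a, IsTagged E) ∧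
    PairwiseNoncrossing (Tset n h a) ∧
    (∀ E : Edge n, IsTagged E → E ∉ Tset n h a → ∃ F ∈ Tset n h a, Crosses E F) := by
  refine ⟨fun E hE => hE.1, ?_, ?_⟩
  · rintro E ⟨hEt, hEp⟩ F ⟨hFt, hFp⟩ hc
    rcases hc with ⟨hE1, hF1, x1, y1, x2, y2, ⟨⟨k1, hx1⟩, _, hlt1, hub1⟩,
        ⟨⟨k2, hx2⟩, _, hlt2, hub2⟩, hord⟩ |
      ⟨hE1, hF1, x, y, t, ⟨⟨k1, hx⟩, _, hlt, hub⟩, ⟨k2, ht⟩, h1, h2⟩ |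
      ⟨hE1, hF1, x, y, t, ⟨⟨k1, hx⟩, _, hlt, hub⟩, ⟨k2, ht⟩, h1, h2⟩ |
      ⟨hE1, hF1, hne, _⟩
    · rw [hEp] at hx1; rw [hFp] at hx2
      rcases hord with ⟨o1, o2, o3⟩ | ⟨o1, o2, o3⟩
      · exact int_gap k1 k2 hx1 hx2 o1 (by linarith)
      · exact int_gap k2 k1 hx2 hx1 o1 (by linarith)
    · rw [hEp] at hx; rw [hFp] at ht
      exact int_gap k1 k2 hx ht h1 (by linarith)
    · rw [hFp] at hx; rw [hEp] at ht
      exact int_gap k1 k2 hx ht h1 (by linarith)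
    · exact hne (hEp.trans hFp.symm)
  · intro E hEt hEnot
    have hp : E.p ≠ (h, a) := fun hp => hEnot ⟨hEt, hp⟩
    obtain ⟨hq, hsgn, himp⟩ := hEt
    by_cases hpq : E.p = E.q
    · refine ⟨⟨(h, a), (h, a), -E.sgn⟩, ⟨⟨?_, ?_, fun hne' => absurd rfl hne'⟩, rfl⟩,
        Or.inr (Or.inr (Or.inr ⟨hpq, rfl, hp, ?_⟩))⟩
      · simp
      · rcases hsgn with h1 | h1 <;> rw [h1] <;> norm_num
      · rcases hsgn with h1 | h1 <;> rw [h1] <;> norm_num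
    · have hx0 := theta_pos n E.p
      have hx1 := theta_lt_one n E.p
      have hz0 := theta_pos n E.q
      have hz1 := theta_lt_one n E.q
      have hc0 := theta_pos n ((h, a) : Fin (n+1) × ℤ)
      have hc1 := theta_lt_one n ((h, a) : Fin (n+1) × ℤ)
      have hxc : theta n E.p ≠ theta n (h, a) := fun he => hp (theta_inj he)
      have hxz : theta n E.p ≠ theta n E.q := fun he => hpq (theta_inj he)
      obtain ⟨y, ky, hyz, hxy, hyx, hycase⟩ :
          ∃ (y : ℝ) (ky : ℤ), y = theta n E.q + (ky : ℝ) ∧ theta n E.p < y ∧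
            y < theta n E.p + 1 ∧ (y = theta n E.q ∨ 1 < y) := by
        rcases lt_or_gt_of_ne hxz with hlt | hlt
        · exact ⟨theta n E.q, 0, by push_cast; ring, hlt, by linarith, Or.inl rfl⟩
        · exact ⟨theta n E.q + 1, 1, by push_cast; ring, by linarith, by linarith,
            Or.inr (by linarith)⟩
      obtain ⟨t0, kt, htc, hxt, htx⟩ :
          ∃ (t0 : ℝ) (kt : ℤ), t0 = theta n (h, a) + (kt : ℝ) ∧ theta n E.p < t0 ∧
            t0 < theta n E.p + 1 := by
        rcases lt_or_gt_of_ne hxc with hlt | hlt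
        · exact ⟨theta n (h, a), 0, by push_cast; ring, hlt, by linarith⟩
        · exact ⟨theta n (h, a) + 1, 1, by push_cast; ring, by linarith, by linarith⟩
      have liftE : IsLift E (theta n E.p) y :=
        ⟨⟨0, by push_cast; ring⟩, ⟨ky, hyz⟩, hxy, hyx⟩
      rcases lt_or_ge t0 y with ht0y | hyt0
      · exact ⟨⟨(h, a), (h, a), 1⟩, ⟨⟨by simp, Or.inl rfl, fun _ => rfl⟩, rfl⟩,
          Or.inr (Or.inl ⟨hpq, rfl, theta n E.p, y, t0, liftE, ⟨kt, htc⟩, hxt, ht0y⟩)⟩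
      · have hxx' : theta n E.p < theta n (E.p.1, E.p.2 + 1) := theta_succ' n E.p.1 E.p.2
        have hx'1 := theta_lt_one n ((E.p.1, E.p.2 + 1) : Fin (n+1) × ℤ)
        have hx'y : theta n (E.p.1, E.p.2 + 1) < y := by
          rcases hycase with hyeq | hy1
          · rcases lt_trichotomy (theta n (E.p.1, E.p.2 + 1)) (theta n E.q) with hl | he | hg
            · rw [hyeq]; exact hl
            · exact absurd (theta_inj he).symm hq
            · exact absurd (no_between E.p E.q (by rw [← hyeq]; exact hxy) hg) not_false
          · linarith
        have hQa : ((E.p.1, E.p.2 + 1) : Fin (n+1) × ℤ) ≠ (h, a + 1) := by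
          intro he
          apply hp
          have h1 : E.p.1 = h := congrArg Prod.fst he
          have h2 : E.p.2 + 1 = a + 1 := congrArg Prod.snd he
          exact Prod.ext h1 (by omega)
        have hQP : ((h, a) : Fin (n+1) × ℤ) ≠ (E.p.1, E.p.2 + 1) := by
          intro he
          have hx'c : theta n ((E.p.1, E.p.2 + 1) : Fin (n+1) × ℤ) = theta n (h, a) := by
            rw [← he]
          exact int_gap 0 kt (show theta n ((E.p.1, E.p.2 + 1) : Fin (n+1) × ℤ)
              = theta n (h, a) + ((0:ℤ):ℝ) by rw [hx'c]; push_cast; ring) htc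
            (by linarith) (by linarith)
        refine ⟨⟨(h, a), (E.p.1, E.p.2 + 1), 1⟩, ⟨⟨hQa, Or.inl rfl, fun _ => rfl⟩, rfl⟩,
          Or.inl ⟨hpq, hQP, theta n E.p, y, t0 - 1, theta n (E.p.1, E.p.2 + 1), liftE,
            ⟨⟨kt - 1, by rw [htc]; push_cast; ring⟩, ⟨0, by push_cast; ring⟩,
              by linarith, by linarith⟩,
            Or.inr ⟨by linarith, hxx', hx'y⟩⟩⟩

end PuncturedGon
end

section
/- There exists a triangulation of the punctured (n,∞)-gon P_{n,∞} that contains no puncture edge, i.e., no tagged edge with equal endpoints. -/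
/-!
On each line `h` the arcs from `(h, -m)` to `(h, m)`, `m ≥ 1`, are pairwise nested, hence pairwise
non-crossing, and a puncture edge at `(h, a)` crosses the arc with `m > |a|`. By Zorn's lemma these
arcs extend to a maximal non-crossing family of tagged edges, i.e. a triangulation, which then
cannot contain a puncture edge.
-/

namespace PuncturedGon

section Order

lemma sig_strictMono : StrictMono sig := by
  intro a b hab
  have hab' : (a : ℝ) < b := by exact_mod_cast hab
  have : (a : ℝ) / (2 * (1 + |(a : ℝ)|)) < b / (2 * (1 + |(b : ℝ)|)) := by
    rw [div_lt_div_iff₀ (by positivity) (by positivity)]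
    rcases abs_cases (a : ℝ) with ⟨ea, _⟩ | ⟨ea, _⟩ <;>
      rcases abs_cases (b : ℝ) with ⟨eb, _⟩ | ⟨eb, _⟩ <;>
      rw [ea, eb] <;> nlinarith
  simp only [sig]; linarith

/-- Holds because `sig` takes values in `(0, 1)`. -/
lemma strictMono_int_add_sig : StrictMono fun z : ℤ ×ₗ ℤ => ((ofLex z).1 : ℝ) + sig (ofLex z).2 := by
  rintro ⟨N, a⟩ ⟨M, b⟩ h
  show (N : ℝ) + sig a < M + sig b
  rcases (Prod.Lex.toLex_lt_toLex).mp h with hNM | ⟨rfl, hab⟩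
  · have : (N : ℝ) + 1 ≤ M := by exact_mod_cast hNM
    linarith [sig_lt_one a, sig_pos b]
  · simpa using sig_strictMono hab

/-- The lifts `θ(p) + j` of marked points to `ℝ` are ordered lexicographically by the line they
lie on in the universal cover, then by index; this is the position of `θ(p) + j` in that order. -/
def liftPos (n : ℕ) (p : Fin (n + 1) × ℤ) (j : ℤ) : ℤ ×ₗ ℤ :=
  toLex ((n + 1) * j + p.1, p.2)

lemma theta_add_eq (n : ℕ) (p : Fin (n + 1) × ℤ) (j : ℤ) :
    theta n p + j = ((((n + 1) * j + p.1 : ℤ) : ℝ) + sig p.2) / (n + 1) := by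
  rw [theta]; field_simp; push_cast; ring

lemma theta_add_lt_theta_add_iff {n : ℕ} {p q : Fin (n + 1) × ℤ} {i j : ℤ} :
    theta n p + i < theta n q + j ↔ liftPos n p i < liftPos n q j := by
  rw [theta_add_eq, theta_add_eq, div_lt_div_iff_of_pos_right (by positivity)]
  exact strictMono_int_add_sig.lt_iff_lt (a := liftPos n p i) (b := liftPos n q j)

lemma theta_lt_theta_iff {n : ℕ} {p q : Fin (n + 1) × ℤ} :
    theta n p < theta n q ↔ liftPos n p 0 < liftPos n q 0 := by
  simpa using theta_add_lt_theta_add_iff (p := p) (q := q) (i := 0) (j := 0)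

end Order

section Crossing

variable {n : ℕ}

lemma int_eq_zero_of_abs_cast_lt_one {k : ℤ} (h : |(k : ℝ)| < 1) : k = 0 := by
  rw [← Int.cast_abs] at h
  exact Int.abs_lt_one_iff.mp (by exact_mod_cast h)

/-- Two lifts of the same edge differ by an integral translation, because both have length `< 1`. -/
lemma IsLift.exists_shift {E : Edge n} {x y x' y' : ℝ} (h : IsLift E x y) (h' : IsLift E x' y') :
    ∃ k : ℤ, x' = x + k ∧ y' = y + k := by
  obtain ⟨⟨a, rfl⟩, ⟨b, rfl⟩, hxy, hyx⟩ := h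
  obtain ⟨⟨a', rfl⟩, ⟨b', rfl⟩, hxy', hyx'⟩ := h'
  have hd : b' - a' - (b - a) = 0 := int_eq_zero_of_abs_cast_lt_one <| by
    push_cast; rw [abs_lt]; constructor <;> linarith
  refine ⟨a' - a, by push_cast; ring, ?_⟩
  rw [show b' = b + (a' - a) by omega]; push_cast; ring

lemma Crosses.symm {E F : Edge n} : Crosses E F → Crosses F E := by
  rintro (⟨h₁, h₂, x₁, y₁, x₂, y₂, L₁, L₂, hd⟩ | ⟨h₁, h₂, rest⟩ | ⟨h₁, h₂, rest⟩ | ⟨h₁, h₂, h₃, h₄⟩)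
  · exact Or.inl ⟨h₂, h₁, x₂, y₂, x₁, y₁, L₂, L₁, hd.symm⟩
  · exact Or.inr (Or.inr (Or.inl ⟨h₂, h₁, rest⟩))
  · exact Or.inr (Or.inl ⟨h₂, h₁, rest⟩)
  · exact Or.inr (Or.inr (Or.inr ⟨h₂, h₁, h₃.symm, h₄.symm⟩))

lemma not_crosses_self (E : Edge n) : ¬ Crosses E E := by
  rintro (⟨-, -, x₁, y₁, x₂, y₂, L₁, L₂, hd⟩ | ⟨h₁, h₂, -⟩ | ⟨h₁, h₂, -⟩ | ⟨-, -, h, -⟩)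
  · obtain ⟨k, rfl, rfl⟩ := L₁.exists_shift L₂
    have hlen : y₁ - x₁ < 1 := by linarith [L₁.2.2.2]
    have hk : 0 < |(k : ℝ)| ∧ |(k : ℝ)| < 1 := by
      rcases hd with ⟨_, _, _⟩ | ⟨_, _, _⟩
      · rw [abs_of_pos (by linarith)]; constructor <;> linarith
      · rw [abs_of_neg (by linarith)]; constructor <;> linarith
    simp [int_eq_zero_of_abs_cast_lt_one hk.2] at hk
  · exact h₁ h₂
  · exact h₂ h₁
  · exact h rfl

end Crossing

section Triangulation

variable {n : ℕ}

lemma isTriangulation_of_maximal {T : Set (Edge n)}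
    (hT : Maximal (fun T => (∀ E ∈ T, IsTagged E) ∧ PairwiseNoncrossing T) T) :
    IsTriangulation T := by
  refine ⟨hT.prop.1, hT.prop.2, fun E hE hET => ?_⟩
  by_contra! hno
  have hins : (∀ F ∈ insert E T, IsTagged F) ∧ PairwiseNoncrossing (insert E T) := by
    refine ⟨Set.forall_mem_insert.mpr ⟨hE, hT.prop.1⟩, ?_⟩
    rintro A (rfl | hA) B (rfl | hB)
    · exact not_crosses_self _
    · exact hno B hB
    · exact fun h => hno A hA h.symm
    · exact hT.prop.2 A hA B hB
  exact hET (hT.eq_of_subset hins (Set.subset_insert E T) ▸ Set.mem_insert E T)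

theorem exists_triangulation_superset {S : Set (Edge n)} (hS : ∀ E ∈ S, IsTagged E)
    (hS' : PairwiseNoncrossing S) : ∃ T, S ⊆ T ∧ IsTriangulation T := by
  obtain ⟨T, hST, hT⟩ := zorn_subset_nonempty
    {T : Set (Edge n) | (∀ E ∈ T, IsTagged E) ∧ PairwiseNoncrossing T}
    (fun c hc hchain _ => ⟨⋃₀ c, ⟨fun E ⟨t, ht, hE⟩ => (hc ht).1 E hE,
      fun E ⟨t, ht, hE⟩ F ⟨u, hu, hF⟩ => (hchain.total ht hu).elim
        (fun htu => (hc hu).2 E (htu hE) F hF) (fun hut => (hc ht).2 E hE F (hut hF))⟩,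
      fun _ => Set.subset_sUnion_of_mem⟩)
    S ⟨hS, hS'⟩
  exact ⟨T, hST, isTriangulation_of_maximal hT⟩

end Triangulation

section Chords

variable {n : ℕ}

/-- The arc from `(h, -m)` to `(h, m)`, cutting off the marked points `(h, a)` with `|a| < m`. -/
def chord (n : ℕ) (h : Fin (n + 1)) (m : ℤ) : Edge n := ⟨(h, -m), (h, m), 1⟩

def chords (n : ℕ) : Set (Edge n) := {E | ∃ h : Fin (n + 1), ∃ m : ℤ, 0 < m ∧ E = chord n h m}

lemma isTagged_chord (h : Fin (n + 1)) (m : ℤ) : IsTagged (chord n h m) :=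
  ⟨by simp only [chord, ne_eq, Prod.mk.injEq, true_and]; omega, Or.inl rfl, fun _ => rfl⟩

lemma chord_p_ne_q (h : Fin (n + 1)) {m : ℤ} (hm : 0 < m) : (chord n h m).p ≠ (chord n h m).q := by
  simp only [chord, ne_eq, Prod.mk.injEq, true_and]; omega

lemma isLift_chord (h : Fin (n + 1)) {m : ℤ} (hm : 0 < m) :
    IsLift (chord n h m) (theta n (h, -m)) (theta n (h, m)) := by
  refine ⟨⟨0, by simp [chord]⟩, ⟨0, by simp [chord]⟩, ?_, ?_⟩
  · rw [theta_lt_theta_iff, liftPos, liftPos, Prod.Lex.toLex_lt_toLex]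
    simp only [mul_zero, zero_add, lt_self_iff_false, neg_lt_self_iff, true_and, false_or]
    exact hm
  · have := (theta_add_lt_theta_add_iff (p := (h, m)) (q := (h, -m)) (i := 0) (j := 1)).mpr <| by
      rw [liftPos, liftPos, Prod.Lex.toLex_lt_toLex]; simp
    simpa using this

lemma exists_shift_of_isLift_chord {h : Fin (n + 1)} {m : ℤ} (hm : 0 < m) {x y : ℝ}
    (hxy : IsLift (chord n h m) x y) : ∃ j : ℤ, x = theta n (h, -m) + j ∧ y = theta n (h, m) + j :=
  (isLift_chord h hm).exists_shift hxy

/-- Lexicographic intervals `[(P, -m), (P, m)]` are nested or disjoint, so never interleave. -/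
lemma not_lex_interleave (P Q m l : ℤ) :
    ¬ (toLex (P, -m) < toLex (Q, -l) ∧ toLex (Q, -l) < toLex (P, m) ∧ toLex (P, m) < toLex (Q, l)) := by
  simp only [Prod.Lex.toLex_lt_toLex]; omega

lemma not_crosses_chord_chord (h k : Fin (n + 1)) {m l : ℤ} (hm : 0 < m) (hl : 0 < l) :
    ¬ Crosses (chord n h m) (chord n k l) := by
  rintro (⟨-, -, x₁, y₁, x₂, y₂, L₁, L₂, hd⟩ | ⟨-, he, -⟩ | ⟨he, -⟩ | ⟨he, -⟩)
  · obtain ⟨i, rfl, rfl⟩ := exists_shift_of_isLift_chord hm L₁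
    obtain ⟨j, rfl, rfl⟩ := exists_shift_of_isLift_chord hl L₂
    simp only [theta_add_lt_theta_add_iff, liftPos] at hd
    rcases hd with hd | hd
    · exact not_lex_interleave _ _ m l hd
    · exact not_lex_interleave _ _ l m hd
  · exact chord_p_ne_q k hl he
  · exact chord_p_ne_q h hm he
  · exact chord_p_ne_q h hm he

lemma isTagged_of_mem_chords {E : Edge n} (hE : E ∈ chords n) : IsTagged E := by
  obtain ⟨h, m, -, rfl⟩ := hE
  exact isTagged_chord h m

lemma pairwiseNoncrossing_chords : PairwiseNoncrossing (chords n) := by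
  rintro _ ⟨h, m, hm, rfl⟩ _ ⟨k, l, hl, rfl⟩
  exact not_crosses_chord_chord h k hm hl

lemma crosses_chord_of_p_eq_q {E : Edge n} (hE : E.p = E.q) :
    Crosses E (chord n E.p.1 (|E.p.2| + 1)) := by
  have hm : 0 < |E.p.2| + 1 := by positivity
  refine Or.inr (Or.inr (Or.inl ⟨hE, chord_p_ne_q _ hm, _, _, theta n E.p,
    isLift_chord _ hm, ⟨0, by simp⟩, ?_, ?_⟩)) <;>
  · rw [theta_lt_theta_iff, liftPos, liftPos, Prod.Lex.toLex_lt_toLex]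
    simp only [mul_zero, zero_add, lt_self_iff_false, true_and, false_or]
    cases abs_cases E.p.2 <;> omega

end Chords

/-- there exists a triangulation of `P_{n+1,∞}` without puncture edges. -/
theorem exists_triangulation_no_puncture_edge (n : ℕ) :
    ∃ T : Set (Edge n), IsTriangulation T ∧ ∀ E ∈ T, E.p ≠ E.q := by
  obtain ⟨T, hchords, hT⟩ :=
    exists_triangulation_superset (fun _ => isTagged_of_mem_chords) pairwiseNoncrossing_chords
  refine ⟨T, hT, fun E hE hpq => hT.2.1 E hE _ (hchords ?_) (crosses_chord_of_p_eq_q hpq)⟩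
  exact ⟨E.p.1, _, by positivity, rfl⟩

end PuncturedGon
end

section
/- The representation S = ⊕_{v ∈ 𝔻_{n,∞}} S_v (the direct sum of all simple representations) of the poset 𝔻_{n,∞} is pointwise finite-dimensional, but there is no epimorphism (i.e., no natural transformation that is surjective at every vertex) from a finite direct sum of representable projectives P_{v₁} ⊕ ⋯ ⊕ P_{v_r} onto S. In particular, the category of pointwise finite-dimensional representations of 𝔻_{n,∞} strictly contains the subcategory of representations finitely generated by representable projectives. -/
/-!
STATEMENT 12: The direct sum `S = ⊕_v S_v` of all simple representations of the poset
`𝔻_{n,∞}` is pointwise finite-dimensional, but there is no epimorphism (no natural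
transformation surjective at every vertex) from a finite direct sum of representable
projectives `P_{v₁} ⊕ ⋯ ⊕ P_{v_r}` onto `S`.  In particular, the category of pointwise
finite-dimensional representations of `𝔻_{n,∞}` strictly contains the subcategory of
representations finitely generated by representable projectives.

The poset `𝔻_{n+1,∞}` (covering all `n ≥ 1`): the linear order `C` (blocks
`B₁⁺ < B₂ < ⋯ < B_{n+1} < B₁⁻`) together with two incomparable elements `t1, t2`
greater than everything in `C`.  The direct sum of all simples has value `k` at every
vertex, with structure map along `v ≤ w` the identity for `v = w` and `0` otherwise;
the representable projective `P_v` has value `k` at `w ≥ v` and `0` elsewhere, with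
identities between the nonzero values (here a value `k` resp. `0` is encoded as the
one- resp. zero-dimensional space of functions `PLift (v ≤ w) → k`).
-/

open scoped Classical

namespace DInfty


/-- Marked-point data indexing the linear order `C`. -/
abbrev MP (n : ℕ) := Fin (n + 1) × ℤ

/-- Membership in `C`: everything except `(1,-1)` and `(1,0)` (here `(0,-1)`, `(0,0)`). -/
def InC (n : ℕ) (p : MP n) : Prop := p ≠ (0, -1) ∧ p ≠ (0, 0)

/-- Block index: `B₁⁺` is block `0`, `B_j` (`p.1 ≠ 0`) is block `p.1`, `B₁⁻` is block
`n+1`. -/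
def blk (n : ℕ) (p : MP n) : ℕ :=
  if p.1 = 0 then (if 1 ≤ p.2 then 0 else n + 1) else p.1.val

/-- The linear order of `C`. -/
def Cle (n : ℕ) (p q : MP n) : Prop :=
  blk n p < blk n q ∨ (blk n p = blk n q ∧ p.2 ≤ q.2)

/-- The vertices of the poset `𝔻_{n+1,∞}`: the elements of `C` and two extra elements
`t1 = (1,-1)` and `t2 = (1,-1')`. -/
inductive DVtx (n : ℕ) where
  | c : {p : MP n // InC n p} → DVtx n
  | t1 : DVtx n
  | t2 : DVtx n

/-- The order of `𝔻_{n+1,∞}`: `C` is ordered as above, `t1` and `t2` are incomparable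
to each other and greater than every element of `C`. -/
def Dle (n : ℕ) : DVtx n → DVtx n → Prop
  | .c p, .c q => Cle n p.1 q.1
  | .c _, .t1 => True
  | .c _, .t2 => True
  | .t1, .t1 => True
  | .t2, .t2 => True
  | _, _ => False

/-- A representation of the poset with vertex set `DVtx n` and order relation `r`, over
the field `k`: a functor to `k`-vector spaces. -/
structure DRep (n : ℕ) (k : Type) [Field k] (r : DVtx n → DVtx n → Prop) where
  V : DVtx n → Type
  [inst : ∀ v, AddCommGroup (V v)]
  [mod : ∀ v, Module k (V v)]
  map : ∀ {v w : DVtx n}, r v w → (V v →ₗ[k] V w)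
  map_id : ∀ (v : DVtx n) (h : r v v), map h = LinearMap.id
  map_comp : ∀ {u v w : DVtx n} (h₁ : r u v) (h₂ : r v w) (h₃ : r u w),
    map h₃ = (map h₂).comp (map h₁)

attribute [instance] DRep.inst DRep.mod

/-- Morphisms of representations: natural transformations. -/
structure DHom {n : ℕ} {k : Type} [Field k] {r : DVtx n → DVtx n → Prop}
    (M N : DRep n k r) where
  app : ∀ v, M.V v →ₗ[k] N.V v
  natural : ∀ {v w : DVtx n} (h : r v w),
    (app w).comp (M.map h) = (N.map h).comp (app v)

/-- Pointwise finite-dimensionality. -/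
def Pwf {n : ℕ} {k : Type} [Field k] {r : DVtx n → DVtx n → Prop}
    (M : DRep n k r) : Prop :=
  ∀ v, FiniteDimensional k (M.V v)

lemma Cle_trans {n : ℕ} {p q s : MP n} (h1 : Cle n p q) (h2 : Cle n q s) :
    Cle n p s := by
  unfold Cle at *
  omega

lemma Cle_antisymm {n : ℕ} {p q : MP n} (h1 : Cle n p q) (h2 : Cle n q p) : p = q := by
  unfold Cle at h1 h2
  have hb : blk n p = blk n q := by omega
  have hsnd : p.2 = q.2 := by omega
  have hfst : p.1 = q.1 := by
    unfold blk at hb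
    by_cases hp : p.1 = 0 <;> by_cases hq : q.1 = 0
    · rw [hp, hq]
    · exfalso
      have hqv : q.1.val ≠ 0 := by
        intro h0
        exact hq (Fin.ext (by simpa using h0))
      have hlt := q.1.isLt
      rw [if_pos hp, if_neg hq] at hb
      by_cases h12 : (1 : ℤ) ≤ p.2 <;> simp [h12] at hb <;> omega
    · exfalso
      have hpv : p.1.val ≠ 0 := by
        intro h0
        exact hp (Fin.ext (by simpa using h0))
      have hlt := p.1.isLt
      rw [if_neg hp, if_pos hq] at hb
      by_cases h12 : (1 : ℤ) ≤ q.2 <;> simp [h12] at hb <;> omega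
    · rw [if_neg hp, if_neg hq] at hb
      exact Fin.ext hb
  exact Prod.ext hfst hsnd

lemma Dle_trans {n : ℕ} {u v w : DVtx n} (h1 : Dle n u v) (h2 : Dle n v w) :
    Dle n u w := by
  cases u <;> cases v <;> cases w <;>
    first
      | exact False.elim h1
      | exact False.elim h2
      | trivial
      | exact Cle_trans h1 h2

lemma Dle_antisymm {n : ℕ} {u v : DVtx n} (h1 : Dle n u v) (h2 : Dle n v u) :
    u = v := by
  cases u <;> cases v <;>
    first
      | rfl
      | exact False.elim h1
      | exact False.elim h2
      | exact congrArg DVtx.c (Subtype.ext (Cle_antisymm h1 h2))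

/-- The representation associated with an up-closed set of vertices `S`: value `k` on
`S` (encoded as `PLift (S v) → k`), value `0` elsewhere, identities between the nonzero
values. -/
noncomputable def upRep (n : ℕ) (k : Type) [Field k] (S : DVtx n → Prop)
    (hS : ∀ {u v : DVtx n}, Dle n u v → S u → S v) : DRep n k (Dle n) where
  V v := PLift (S v) → k
  map {v w} _h :=
    { toFun := fun f _hw => if hv : S v then f ⟨hv⟩ else 0
      map_add' := by
        intro f g
        funext hw
        by_cases hv : S v <;> simp [hv]
      map_smul' := by
        intro c f
        funext hw
        by_cases hv : S v <;> simp [hv] }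
  map_id := by
    intro v h
    refine LinearMap.ext fun f => funext fun hv => ?_
    show (if hv' : S v then f ⟨hv'⟩ else 0) = f hv
    rw [dif_pos hv.down]
  map_comp := by
    intro u v w h₁ h₂ h₃
    refine LinearMap.ext fun f => funext fun hw => ?_
    show (if hu : S u then f ⟨hu⟩ else 0)
        = (if hv : S v then (if hu : S u then f ⟨hu⟩ else 0) else 0)
    by_cases hu : S u
    · have hv : S v := hS h₁ hu
      rw [dif_pos hu, dif_pos hv]
    · rw [dif_neg hu]
      by_cases hv : S v
      · rw [dif_pos hv]
      · rw [dif_neg hv]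

/-- The representable projective `P_v`. -/
noncomputable def Proj (n : ℕ) (k : Type) [Field k] (v : DVtx n) : DRep n k (Dle n) :=
  upRep n k (fun w => Dle n v w) (fun h hv => Dle_trans hv h)

/-- The finite direct sum of a family of representations. -/
noncomputable def dsum {n : ℕ} {k : Type} [Field k] {r : ℕ}
    (M : Fin r → DRep n k (Dle n)) : DRep n k (Dle n) where
  V w := ∀ i, (M i).V w
  map h := LinearMap.pi fun i => ((M i).map h).comp (LinearMap.proj i)
  map_id := by
    intro v h
    refine LinearMap.ext fun f => funext fun i => ?_
    show ((M i).map h) (f i) = f i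
    rw [(M i).map_id v h]
    rfl
  map_comp := by
    intro u v w h₁ h₂ h₃
    refine LinearMap.ext fun f => funext fun i => ?_
    show ((M i).map h₃) (f i) = ((M i).map h₂) (((M i).map h₁) (f i))
    rw [(M i).map_comp h₁ h₂ h₃]
    rfl

/-- The direct sum `S = ⊕_v S_v` of all the simple representations: value `k` at every
vertex, structure map along `v ≤ w` equal to the identity if `v = w` and to `0`
otherwise. -/
noncomputable def simpSum (n : ℕ) (k : Type) [Field k] : DRep n k (Dle n) where
  V _ := k
  map {v w} _ := if v = w then LinearMap.id else 0
  map_id := by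
    intro v h
    simp
  map_comp := by
    intro u v w h₁ h₂ h₃
    by_cases huv : u = v
    · subst huv
      by_cases huw : u = w
      · subst huw
        simp
      · simp [huw]
    · have huw : u ≠ w := fun he => huv (by subst he; exact Dle_antisymm h₁ h₂)
      simp [huv, huw]

/-!
There are infinitely many vertices, so some `w` differs from all of `v₁, …, v_r`. A morphism
`P_v → S` vanishes at every `w ≠ v`: `P_v(w)` is the image of `P_v(v)` under the structure map,
while the structure map of `S` from `v` to `w` is zero. So any morphism `⊕ P_{vᵢ} → S` is zero
at `w`, but `S(w) = k`.
-/

lemma Dle_refl {n : ℕ} (v : DVtx n) : Dle n v v := by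
  cases v with
  | c _ => exact Or.inr ⟨rfl, le_rfl⟩
  | t1 | t2 => trivial

instance (n : ℕ) : Infinite (DVtx n) :=
  Infinite.of_injective
    (fun m : ℕ => DVtx.c ⟨(0, (m : ℤ) + 1), by simp only [InC, ne_eq, Prod.mk.injEq]; omega⟩)
    fun a b hab => by
      simp only [DVtx.c.injEq, Subtype.mk.injEq, Prod.mk.injEq] at hab
      omega

section Hom

variable {n : ℕ} {k : Type} [Field k]

def DHom.comp {r : DVtx n → DVtx n → Prop} {L M N : DRep n k r}
    (ψ : DHom M N) (φ : DHom L M) : DHom L N where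
  app v := (ψ.app v).comp (φ.app v)
  natural h := by
    rw [LinearMap.comp_assoc, φ.natural h, ← LinearMap.comp_assoc, ψ.natural h,
      LinearMap.comp_assoc]

def dsum.ι {r : ℕ} (M : Fin r → DRep n k (Dle n)) (i : Fin r) : DHom (M i) (dsum M) where
  app w := LinearMap.single k (fun j => (M j).V w) i
  natural {v w} h := by
    refine LinearMap.ext fun x => funext fun j => ?_
    change Pi.single (M := fun j => (M j).V w) i ((M i).map h x) j
      = (M j).map h (Pi.single (M := fun j => (M j).V v) i x j)
    by_cases hji : j = i
    · subst hji
      rw [Pi.single_eq_same, Pi.single_eq_same]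
    · rw [Pi.single_eq_of_ne hji, Pi.single_eq_of_ne hji, map_zero]

lemma dsum.app_eq_zero_of_comp_ι {r : ℕ} {M : Fin r → DRep n k (Dle n)} {N : DRep n k (Dle n)}
    (φ : DHom (dsum M) N) {w : DVtx n} (h : ∀ i, (φ.comp (dsum.ι M i)).app w = 0) :
    φ.app w = 0 :=
  LinearMap.pi_ext' h

lemma upRep_map_surjective (S : DVtx n → Prop) (hS : ∀ {u v : DVtx n}, Dle n u v → S u → S v)
    {v w : DVtx n} (h : Dle n v w) (hv : S v) : Function.Surjective ((upRep n k S hS).map h) :=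
  fun f => ⟨fun _ => f ⟨hS h hv⟩, funext fun _ => by
    change (if hv' : S v then f ⟨hS h hv⟩ else 0) = _
    rw [dif_pos hv]⟩

lemma simpSum_map_of_ne {v w : DVtx n} (h : Dle n v w) (hvw : v ≠ w) :
    (simpSum n k).map h = 0 :=
  if_neg hvw

lemma DHom.app_proj_eq_zero {v w : DVtx n} (φ : DHom (Proj n k v) (simpSum n k))
    (hvw : v ≠ w) : φ.app w = 0 := by
  by_cases h : Dle n v w
  · refine LinearMap.ext fun x => ?_
    obtain ⟨y, rfl⟩ := upRep_map_surjective (k := k) _ _ h (Dle_refl v) x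
    change ((φ.app w).comp ((Proj n k v).map h)) y = 0
    rw [φ.natural h, simpSum_map_of_ne h hvw, LinearMap.zero_comp]
    rfl
  · exact LinearMap.ext fun x => by
      rw [show x = 0 from funext fun p => absurd p.down h, map_zero, LinearMap.zero_apply]

lemma DHom.app_dsum_proj_eq_zero {r : ℕ} {vs : Fin r → DVtx n}
    (φ : DHom (dsum fun i => Proj n k (vs i)) (simpSum n k)) {w : DVtx n}
    (hw : ∀ i, vs i ≠ w) : φ.app w = 0 :=
  dsum.app_eq_zero_of_comp_ι φ fun i => (φ.comp (dsum.ι _ i)).app_proj_eq_zero (hw i)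

end Hom

/-- `S = ⊕_v S_v` is pointwise finite-dimensional, but no finite direct
sum of representable projectives admits a natural transformation onto `S` that is
surjective at every vertex; in particular `S` is pointwise finite-dimensional but not
finitely generated by representable projectives. -/
theorem simpSum_pwf_not_finitely_generated (n : ℕ) (k : Type) [Field k] :
    Pwf (simpSum n k) ∧
    ¬ ∃ (r : ℕ) (vs : Fin r → DVtx n)
        (φ : DHom (dsum fun i => Proj n k (vs i)) (simpSum n k)),
        ∀ w, Function.Surjective (φ.app w) := by
  refine ⟨fun _ => inferInstanceAs (FiniteDimensional k k), ?_⟩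
  rintro ⟨r, vs, φ, hsurj⟩
  obtain ⟨w, hw⟩ := Infinite.exists_notMem_finset (Finset.univ.image vs)
  have hzero : φ.app w = 0 :=
    φ.app_dsum_proj_eq_zero fun i hi => hw (Finset.mem_image.2 ⟨i, Finset.mem_univ i, hi⟩)
  obtain ⟨x, hx⟩ := hsurj w (show k from 1)
  exact one_ne_zero (α := k) (hx.symm.trans (by rw [hzero]; rfl))

end DInfty
end
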